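/- arXiv:2209.03803 — 6 statements merged into one kernel-verified Lean document; each statement's English description precedes it below -/
import Mathlib

section
/- Chain rule for observational entropy under sequential coarse-graining: let p_{ij} ≥ 0 be a joint probability distribution with marginals p_j = ∑_i p_{ij}, and let V_{ij} > 0 with V_j = ∑_i V_{ij}. Then -∑_j p_j ln(p_j/V_j) + ∑_{ij} p_{ij} ln(p_{ij}/V_{ij}) = D_KL(P‖Q) where P_{ij} = p_{ij} and Q_{ij} = (V_{ij}/V_j) p_j. Consequently the observational entropy is non-increasing under refinement by an additional measurement: -∑_{ij} p_{ij} ln(p_{ij}/V_{ij}) ≤ -∑_j p_j ln(p_j/V_j), with equality iff p_{ij} = (V_{ij}/V_j) p_j whenever p_j ≠ 0. -/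
/-!
Writing `Q i j = V i j / Vm j * pm j`, the identity `log (p / Q) = log (p / V) - log (pm / Vm)`
summed against `p` is the chain rule; the remaining claims are Gibbs' inequality `0 ≤ D(P ‖ Q)`
with its equality case, applied on `ι × κ`. Gibbs' inequality follows termwise from
`q * klFun (w / q) = w * log (w / q) + q - w ≥ 0`, which vanishes only at `w = q`.
-/

open Real InformationTheory

section Gibbs

lemma mul_klFun_div (w : ℝ) {q : ℝ} (hq : q ≠ 0) :
    q * klFun (w / q) = w * log (w / q) + q - w := by
  rw [klFun_apply]
  field_simp

variable {w q : ℝ}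

lemma mul_log_div_add_sub_nonneg (hw : 0 ≤ w) (hq : 0 ≤ q) (hqw : q = 0 → w = 0) :
    0 ≤ w * log (w / q) + q - w := by
  rcases hq.eq_or_lt with rfl | hq
  · simp [hqw rfl]
  · rw [← mul_klFun_div w hq.ne']
    exact mul_nonneg hq.le (klFun_nonneg (div_nonneg hw hq.le))

lemma mul_log_div_add_sub_eq_zero_iff (hw : 0 ≤ w) (hq : 0 ≤ q) (hqw : q = 0 → w = 0) :
    w * log (w / q) + q - w = 0 ↔ w = q := by
  rcases hq.eq_or_lt with rfl | hq
  · simp [hqw rfl]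
  · rw [← mul_klFun_div w hq.ne', mul_eq_zero, klFun_eq_zero_iff (div_nonneg hw hq.le),
      div_eq_one_iff_eq hq.ne']
    simp [hq.ne']

variable {α : Type*} [Fintype α] {w q : α → ℝ}

lemma sum_mul_log_div_eq (w q : α → ℝ) :
    ∑ a, w a * log (w a / q a)
      = ∑ a, (w a * log (w a / q a) + q a - w a) + (∑ a, w a - ∑ a, q a) := by
  simp only [Finset.sum_sub_distrib, Finset.sum_add_distrib]
  ring

theorem sum_mul_log_div_nonneg (hw : ∀ a, 0 ≤ w a) (hq : ∀ a, 0 ≤ q a)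
    (hqw : ∀ a, q a = 0 → w a = 0) (hsum : ∑ a, q a ≤ ∑ a, w a) :
    0 ≤ ∑ a, w a * log (w a / q a) := by
  rw [sum_mul_log_div_eq]
  have hgap : ∀ a ∈ Finset.univ, 0 ≤ w a * log (w a / q a) + q a - w a :=
    fun a _ ↦ mul_log_div_add_sub_nonneg (hw a) (hq a) (hqw a)
  linarith [Finset.sum_nonneg hgap]

theorem sum_mul_log_div_eq_zero_iff (hw : ∀ a, 0 ≤ w a) (hq : ∀ a, 0 ≤ q a)
    (hqw : ∀ a, q a = 0 → w a = 0) (hsum : ∑ a, q a ≤ ∑ a, w a) :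
    ∑ a, w a * log (w a / q a) = 0 ↔ ∀ a, w a = q a := by
  have hgap : ∀ a ∈ Finset.univ, 0 ≤ w a * log (w a / q a) + q a - w a :=
    fun a _ ↦ mul_log_div_add_sub_nonneg (hw a) (hq a) (hqw a)
  constructor
  · intro h
    rw [sum_mul_log_div_eq] at h
    have hgap_sum : ∑ a, (w a * log (w a / q a) + q a - w a) = 0 := by
      linarith [Finset.sum_nonneg hgap]
    intro a
    rw [← mul_log_div_add_sub_eq_zero_iff (hw a) (hq a) (hqw a)]
    exact (Finset.sum_eq_zero_iff_of_nonneg hgap).1 hgap_sum a (Finset.mem_univ a)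
  · intro h
    simp [h]

end Gibbs

lemma mul_log_div_div_mul {x v s m : ℝ} (hm : x ≠ 0 → m ≠ 0) (hv : v ≠ 0) (hs : s ≠ 0) :
    x * log (x / (v / s * m)) = x * log (x / v) - x * log (m / s) := by
  rcases eq_or_ne x 0 with rfl | hx
  · simp
  rw [show x / (v / s * m) = x / v / (m / s) by ring,
    log_div (div_ne_zero hx hv) (div_ne_zero (hm hx) hs)]
  ring

section CoarseGraining

variable {ι κ : Type*} [Fintype ι] {p V : ι → κ → ℝ} {pm Vm : κ → ℝ}

lemma le_marginal (hp : ∀ i j, 0 ≤ p i j) (hpm : ∀ j, pm j = ∑ i, p i j) (i : ι) (j : κ) :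
    p i j ≤ pm j :=
  hpm j ▸ Finset.single_le_sum (fun i _ ↦ hp i j) (Finset.mem_univ i)

lemma marginal_pos (hV : ∀ i j, 0 < V i j) (hVm : ∀ j, Vm j = ∑ i, V i j) (i : ι) (j : κ) :
    0 < Vm j :=
  (hV i j).trans_le (le_marginal (fun i j ↦ (hV i j).le) hVm i j)

lemma eq_zero_of_marginal_eq_zero (hp : ∀ i j, 0 ≤ p i j) (hpm : ∀ j, pm j = ∑ i, p i j)
    {i : ι} {j : κ} (h : pm j = 0) : p i j = 0 :=
  le_antisymm (h ▸ le_marginal hp hpm i j) (hp i j)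

lemma cond_nonneg (hp : ∀ i j, 0 ≤ p i j) (hV : ∀ i j, 0 < V i j)
    (hpm : ∀ j, pm j = ∑ i, p i j) (hVm : ∀ j, Vm j = ∑ i, V i j) (i : ι) (j : κ) :
    0 ≤ V i j / Vm j * pm j :=
  mul_nonneg (div_pos (hV i j) (marginal_pos hV hVm i j)).le
    ((hp i j).trans (le_marginal hp hpm i j))

lemma eq_zero_of_cond_eq_zero (hp : ∀ i j, 0 ≤ p i j) (hV : ∀ i j, 0 < V i j)
    (hpm : ∀ j, pm j = ∑ i, p i j) (hVm : ∀ j, Vm j = ∑ i, V i j) {i : ι} {j : κ}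
    (h : V i j / Vm j * pm j = 0) : p i j = 0 :=
  eq_zero_of_marginal_eq_zero hp hpm <|
    (mul_eq_zero.1 h).resolve_left (div_pos (hV i j) (marginal_pos hV hVm i j)).ne'

variable [Fintype κ]

theorem sum_mul_log_div_cond_eq (hp : ∀ i j, 0 ≤ p i j) (hV : ∀ i j, 0 < V i j)
    (hpm : ∀ j, pm j = ∑ i, p i j) (hVm : ∀ j, Vm j = ∑ i, V i j) :
    ∑ i, ∑ j, p i j * log (p i j / (V i j / Vm j * pm j))
      = ∑ i, ∑ j, p i j * log (p i j / V i j) - ∑ j, pm j * log (pm j / Vm j) := by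
  have hterm i j : p i j * log (p i j / (V i j / Vm j * pm j))
      = p i j * log (p i j / V i j) - p i j * log (pm j / Vm j) := by
    refine mul_log_div_div_mul (fun hx ↦ ?_) (hV i j).ne' (marginal_pos hV hVm i j).ne'
    exact ((hp i j).lt_of_ne' hx |>.trans_le (le_marginal hp hpm i j)).ne'
  simp only [hterm, Finset.sum_sub_distrib]
  rw [Finset.sum_comm (f := fun i j ↦ p i j * log (pm j / Vm j))]
  simp only [← Finset.sum_mul, ← hpm]

lemma sum_cond_le (hp : ∀ i j, 0 ≤ p i j) (hpm : ∀ j, pm j = ∑ i, p i j)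
    (hVm : ∀ j, Vm j = ∑ i, V i j) :
    ∑ x : ι × κ, V x.1 x.2 / Vm x.2 * pm x.2 ≤ ∑ x : ι × κ, p x.1 x.2 := by
  rw [Fintype.sum_prod_type_right' fun i j ↦ V i j / Vm j * pm j, Fintype.sum_prod_type_right' p]
  refine Finset.sum_le_sum fun j _ ↦ ?_
  rw [← Finset.sum_mul, ← Finset.sum_div, ← hVm, ← hpm]
  exact mul_le_of_le_one_left (hpm j ▸ Finset.sum_nonneg fun i _ ↦ hp i j) (div_self_le_one _)

theorem sum_mul_log_div_cond_nonneg (hp : ∀ i j, 0 ≤ p i j) (hV : ∀ i j, 0 < V i j)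
    (hpm : ∀ j, pm j = ∑ i, p i j) (hVm : ∀ j, Vm j = ∑ i, V i j) :
    0 ≤ ∑ i, ∑ j, p i j * log (p i j / (V i j / Vm j * pm j)) := by
  rw [← Fintype.sum_prod_type' fun i j ↦ p i j * log (p i j / (V i j / Vm j * pm j))]
  exact sum_mul_log_div_nonneg (fun x ↦ hp x.1 x.2) (fun x ↦ cond_nonneg hp hV hpm hVm x.1 x.2)
    (fun _ ↦ eq_zero_of_cond_eq_zero hp hV hpm hVm) (sum_cond_le hp hpm hVm)

theorem sum_mul_log_div_cond_eq_zero_iff (hp : ∀ i j, 0 ≤ p i j) (hV : ∀ i j, 0 < V i j)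
    (hpm : ∀ j, pm j = ∑ i, p i j) (hVm : ∀ j, Vm j = ∑ i, V i j) :
    ∑ i, ∑ j, p i j * log (p i j / (V i j / Vm j * pm j)) = 0
      ↔ ∀ i j, pm j ≠ 0 → p i j = V i j / Vm j * pm j := by
  rw [← Fintype.sum_prod_type' fun i j ↦ p i j * log (p i j / (V i j / Vm j * pm j))]
  refine (sum_mul_log_div_eq_zero_iff (w := fun x : ι × κ ↦ p x.1 x.2)
    (fun x ↦ hp x.1 x.2) (fun x ↦ cond_nonneg hp hV hpm hVm x.1 x.2)
    (fun _ ↦ eq_zero_of_cond_eq_zero hp hV hpm hVm) (sum_cond_le hp hpm hVm)).trans ?_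
  refine Prod.forall.trans <| forall₂_congr fun i j ↦ ⟨fun h _ ↦ h, fun h ↦ ?_⟩
  by_cases hj : pm j = 0
  · simp [hj, eq_zero_of_marginal_eq_zero hp hpm hj]
  · exact h hj

end CoarseGraining

theorem obs_entropy_chain_rule_general {ι κ : Type*} [Fintype ι] [Fintype κ]
    (p V : ι → κ → ℝ)
    (hp : ∀ i j, 0 ≤ p i j)
    (hV : ∀ i j, 0 < V i j)
    (pm Vm : κ → ℝ)
    (hpm : ∀ j, pm j = ∑ i, p i j) (hVm : ∀ j, Vm j = ∑ i, V i j) :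
    (-∑ j, pm j * Real.log (pm j / Vm j) + ∑ i, ∑ j, p i j * Real.log (p i j / V i j)
        = ∑ i, ∑ j, p i j * Real.log (p i j / ((V i j / Vm j) * pm j)))
    ∧ (-∑ i, ∑ j, p i j * Real.log (p i j / V i j) ≤ -∑ j, pm j * Real.log (pm j / Vm j))
    ∧ ((-∑ i, ∑ j, p i j * Real.log (p i j / V i j) = -∑ j, pm j * Real.log (pm j / Vm j))
        ↔ ∀ i j, pm j ≠ 0 → p i j = (V i j / Vm j) * pm j) := by
  have hchain := sum_mul_log_div_cond_eq hp hV hpm hVm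
  have hnonneg := sum_mul_log_div_cond_nonneg hp hV hpm hVm
  refine ⟨by rw [hchain]; ring, by linarith, ?_⟩
  rw [← sum_mul_log_div_cond_eq_zero_iff hp hV hpm hVm]
  constructor <;> intro h <;> linarith

/-- chain rule for observational entropy under sequential coarse-graining,
non-increase of observational entropy under refinement, and the equality condition. -/
theorem obs_entropy_chain_rule {ι κ : Type*} [Fintype ι] [Fintype κ]
    (p V : ι → κ → ℝ)
    (hp : ∀ i j, 0 ≤ p i j) (hpsum : ∑ i, ∑ j, p i j = 1)
    (hV : ∀ i j, 0 < V i j)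
    (pm Vm : κ → ℝ)
    (hpm : ∀ j, pm j = ∑ i, p i j) (hVm : ∀ j, Vm j = ∑ i, V i j) :
    (-∑ j, pm j * Real.log (pm j / Vm j) + ∑ i, ∑ j, p i j * Real.log (p i j / V i j)
        = ∑ i, ∑ j, p i j * Real.log (p i j / ((V i j / Vm j) * pm j)))
    ∧ (-∑ i, ∑ j, p i j * Real.log (p i j / V i j) ≤ -∑ j, pm j * Real.log (pm j / Vm j))
    ∧ ((-∑ i, ∑ j, p i j * Real.log (p i j / V i j) = -∑ j, pm j * Real.log (pm j / Vm j))
        ↔ ∀ i j, pm j ≠ 0 → p i j = (V i j / Vm j) * pm j) :=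
  obs_entropy_chain_rule_general p V hp hV pm Vm hpm hVm
end

section
/- Monotonicity of observational entropy under stochastic post-processing of POVMs: let p_i ≥ 0 with ∑_i p_i = 1, V_i > 0, and let v_{ji} ≥ 0 be a stochastic matrix with ∑_j v_{ji} = 1 for all i. Define p'_j = ∑_i v_{ji} p_i and V'_j = ∑_i v_{ji} V_i, assuming V'_j > 0 for all j. Then -∑_i p_i ln(p_i/V_i) ≤ -∑_j p'_j ln(p'_j/V'_j), with equality iff p_i = ∑_j (v_{ji} V_i / V'_j) p'_j for all i. -/
/-!
For each outcome `j`, Jensen's inequality for the strictly convex `x ↦ x log x`, with weights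
`v j i * V i / V' j` at the points `p i / V i`, gives the log-sum inequality
`p' j log (p' j / V' j) ≤ ∑ i, v j i * (p i log (p i / V i))`; summing over `j` and using
`∑ j, v j i = 1` gives monotonicity. Equality holds iff `p i / V i = p' j / V' j` whenever
`v j i ≠ 0`, which is exactly `p = ṽ p'` for the Bayesian inverse `ṽ`. Conversely, `ṽ` is
stochastic and maps `V'` back to `V`, so if `p = ṽ p'` the inequality for `ṽ` is the reverse one.
-/

open Finset Real

section LogSum

variable {ι : Type*} [Fintype ι] {p V w : ι → ℝ}

lemma sum_perspective_smul (hV : ∀ i, 0 < V i) (c : ι → ℝ) (Q : ℝ) :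
    ∑ i, (w i * V i / Q) • (p i / V i * c i) = (∑ i, w i * (p i * c i)) / Q := by
  rw [sum_div]
  refine sum_congr rfl fun i _ => ?_
  have := (hV i).ne'
  rw [smul_eq_mul]
  field_simp

lemma sum_perspective_weights_eq_one (hQ : ∑ i, w i * V i ≠ 0) :
    ∑ i, w i * V i / ∑ i, w i * V i = 1 := by
  rw [← sum_div, div_self hQ]

lemma sum_perspective_smul_div (hV : ∀ i, 0 < V i) (Q : ℝ) :
    ∑ i, (w i * V i / Q) • (p i / V i) = (∑ i, w i * p i) / Q := by
  simpa using sum_perspective_smul (w := w) (p := p) hV (fun _ => 1) Q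

lemma mul_log_div_sum_le (hp : ∀ i, 0 ≤ p i) (hV : ∀ i, 0 < V i) (hw : ∀ i, 0 ≤ w i)
    (hQ : 0 < ∑ i, w i * V i) :
    (∑ i, w i * p i) * log ((∑ i, w i * p i) / ∑ i, w i * V i)
      ≤ ∑ i, w i * (p i * log (p i / V i)) := by
  have hJ := convexOn_mul_log.map_sum_le (t := univ) (p := fun i => p i / V i)
    (fun i _ => div_nonneg (mul_nonneg (hw i) (hV i).le) hQ.le)
    (sum_perspective_weights_eq_one hQ.ne') (fun i _ => div_nonneg (hp i) (hV i).le)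
  rwa [sum_perspective_smul_div hV, sum_perspective_smul hV, div_mul_eq_mul_div,
    div_le_div_iff_of_pos_right hQ] at hJ

lemma mul_log_div_sum_eq_iff (hp : ∀ i, 0 ≤ p i) (hV : ∀ i, 0 < V i) (hw : ∀ i, 0 ≤ w i)
    (hQ : 0 < ∑ i, w i * V i) :
    (∑ i, w i * p i) * log ((∑ i, w i * p i) / ∑ i, w i * V i)
        = ∑ i, w i * (p i * log (p i / V i))
      ↔ ∀ i, w i ≠ 0 → p i / V i = (∑ i, w i * p i) / ∑ i, w i * V i := by
  have hJ := strictConvexOn_mul_log.map_sum_eq_iff' (t := univ) (p := fun i => p i / V i)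
    (fun i _ => div_nonneg (mul_nonneg (hw i) (hV i).le) hQ.le)
    (sum_perspective_weights_eq_one hQ.ne') (fun i _ => div_nonneg (hp i) (hV i).le)
  rw [sum_perspective_smul_div hV, sum_perspective_smul hV, div_mul_eq_mul_div,
    div_left_inj' hQ.ne'] at hJ
  simpa [(hV _).ne', hQ.ne'] using hJ

end LogSum

section PostProcessing

variable {ι κ : Type*} [Fintype κ] {p V : ι → ℝ} {v : κ → ι → ℝ} {p' V' : κ → ℝ}

lemma sum_sum_mul_of_sum_eq_one [Fintype ι] (hvsum : ∀ i, ∑ j, v j i = 1) (f : ι → ℝ) :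
    ∑ j, ∑ i, v j i * f i = ∑ i, f i := by
  rw [sum_comm]
  simp only [← sum_mul, hvsum, one_mul]

lemma sum_mul_log_div_le_of_stochastic [Fintype ι] (hp : ∀ i, 0 ≤ p i) (hV : ∀ i, 0 < V i)
    (hv : ∀ j i, 0 ≤ v j i) (hvsum : ∀ i, ∑ j, v j i = 1)
    (hp' : ∀ j, p' j = ∑ i, v j i * p i) (hV' : ∀ j, V' j = ∑ i, v j i * V i)
    (hV'pos : ∀ j, 0 < V' j) :
    ∑ j, p' j * log (p' j / V' j) ≤ ∑ i, p i * log (p i / V i) := by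
  rw [← sum_sum_mul_of_sum_eq_one hvsum]
  refine sum_le_sum fun j _ => ?_
  rw [hp', hV']
  exact mul_log_div_sum_le hp hV (hv j) (hV' j ▸ hV'pos j)

lemma sum_mul_log_div_eq_iff_of_stochastic [Fintype ι] (hp : ∀ i, 0 ≤ p i) (hV : ∀ i, 0 < V i)
    (hv : ∀ j i, 0 ≤ v j i) (hvsum : ∀ i, ∑ j, v j i = 1)
    (hp' : ∀ j, p' j = ∑ i, v j i * p i) (hV' : ∀ j, V' j = ∑ i, v j i * V i)
    (hV'pos : ∀ j, 0 < V' j) :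
    ∑ j, p' j * log (p' j / V' j) = ∑ i, p i * log (p i / V i)
      ↔ ∀ j i, v j i ≠ 0 → p i / V i = p' j / V' j := by
  rw [← sum_sum_mul_of_sum_eq_one hvsum, sum_eq_sum_iff_of_le]
  · refine forall_congr' fun j => ?_
    rw [hp', hV']
    simpa using mul_log_div_sum_eq_iff hp hV (hv j) (hV' j ▸ hV'pos j)
  · intro j _
    rw [hp', hV']
    exact mul_log_div_sum_le hp hV (hv j) (hV' j ▸ hV'pos j)

lemma eq_sum_bayesInverse_mul_of_div_eq (hV : ∀ i, 0 < V i) (hvsum : ∀ i, ∑ j, v j i = 1)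
    (h : ∀ j i, v j i ≠ 0 → p i / V i = p' j / V' j) (i : ι) :
    p i = ∑ j, v j i * V i / V' j * p' j := by
  have hterm : ∀ j, v j i * V i / V' j * p' j = v j i * p i := by
    intro j
    rcases eq_or_ne (v j i) 0 with hvji | hvji
    · simp [hvji]
    · calc v j i * V i / V' j * p' j = v j i * (V i * (p' j / V' j)) := by ring
        _ = v j i * p i := by rw [← h j i hvji, mul_div_cancel₀ _ (hV i).ne']
  simp only [hterm, ← sum_mul, hvsum, one_mul]

lemma le_sum_mul_log_div_of_eq_sum_bayesInverse_mul [Fintype ι] (hp' : ∀ j, 0 ≤ p' j)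
    (hV : ∀ i, 0 < V i) (hv : ∀ j i, 0 ≤ v j i) (hvsum : ∀ i, ∑ j, v j i = 1)
    (hV' : ∀ j, V' j = ∑ i, v j i * V i) (hV'pos : ∀ j, 0 < V' j)
    (h : ∀ i, p i = ∑ j, v j i * V i / V' j * p' j) :
    ∑ i, p i * log (p i / V i) ≤ ∑ j, p' j * log (p' j / V' j) := by
  refine sum_mul_log_div_le_of_stochastic hp' hV'pos
    (fun i j => div_nonneg (mul_nonneg (hv j i) (hV i).le) (hV'pos j).le)
    (fun j => by rw [← sum_div, ← hV', div_self (hV'pos j).ne']) h (fun i => ?_) hV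
  simp only [div_mul_cancel₀ _ (hV'pos _).ne', ← sum_mul, hvsum, one_mul]

end PostProcessing

theorem obs_entropy_stochastic_monotone_general {ι κ : Type*} [Fintype ι] [Fintype κ]
    (p V : ι → ℝ) (v : κ → ι → ℝ)
    (hp : ∀ i, 0 ≤ p i)
    (hV : ∀ i, 0 < V i)
    (hv : ∀ j i, 0 ≤ v j i) (hvsum : ∀ i, ∑ j, v j i = 1)
    (p' V' : κ → ℝ)
    (hp' : ∀ j, p' j = ∑ i, v j i * p i)
    (hV' : ∀ j, V' j = ∑ i, v j i * V i)
    (hV'pos : ∀ j, 0 < V' j) :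
    (-∑ i, p i * Real.log (p i / V i) ≤ -∑ j, p' j * Real.log (p' j / V' j))
    ∧ ((-∑ i, p i * Real.log (p i / V i) = -∑ j, p' j * Real.log (p' j / V' j))
        ↔ ∀ i, p i = ∑ j, (v j i * V i / V' j) * p' j) := by
  have hle := sum_mul_log_div_le_of_stochastic hp hV hv hvsum hp' hV' hV'pos
  have hp'_nonneg : ∀ j, 0 ≤ p' j :=
    fun j => hp' j ▸ sum_nonneg fun i _ => mul_nonneg (hv j i) (hp i)
  refine ⟨neg_le_neg hle, neg_inj.trans ⟨fun heq => ?_, fun hbayes => ?_⟩⟩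
  · exact eq_sum_bayesInverse_mul_of_div_eq hV hvsum
      ((sum_mul_log_div_eq_iff_of_stochastic hp hV hv hvsum hp' hV' hV'pos).1 heq.symm)
  · exact le_antisymm
      (le_sum_mul_log_div_of_eq_sum_bayesInverse_mul hp'_nonneg hV hv hvsum hV' hV'pos hbayes) hle

/-- monotonicity of observational entropy under stochastic post-processing
of POVMs, with the equality condition given by Bayesian inversion. -/
theorem obs_entropy_stochastic_monotone {ι κ : Type*} [Fintype ι] [Fintype κ]
    (p V : ι → ℝ) (v : κ → ι → ℝ)
    (hp : ∀ i, 0 ≤ p i) (hpsum : ∑ i, p i = 1)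
    (hV : ∀ i, 0 < V i)
    (hv : ∀ j i, 0 ≤ v j i) (hvsum : ∀ i, ∑ j, v j i = 1)
    (p' V' : κ → ℝ)
    (hp' : ∀ j, p' j = ∑ i, v j i * p i)
    (hV' : ∀ j, V' j = ∑ i, v j i * V i)
    (hV'pos : ∀ j, 0 < V' j) :
    (-∑ i, p i * Real.log (p i / V i) ≤ -∑ j, p' j * Real.log (p' j / V' j))
    ∧ ((-∑ i, p i * Real.log (p i / V i) = -∑ j, p' j * Real.log (p' j / V' j))
        ↔ ∀ i, p i = ∑ j, (v j i * V i / V' j) * p' j) :=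
  obs_entropy_stochastic_monotone_general p V v hp hV hv hvsum p' V' hp' hV' hV'pos
end

section
/- Quantitative form of stochastic monotonicity: with p_i, V_i, v_{ji}, p'_j, V'_j as in the stochastic post-processing setting, one has the identity S_{C'} - S_C = D_KL(P₂‖Q₂), where (P₂)_{ij} = v_{ji} p_i and (Q₂)_{ij} = (v_{ji} V_i / V'_j) p'_j, and moreover D_KL(P₂‖Q₂) ≥ D_KL(p‖q) where q_i = ∑_j (v_{ji} V_i / V'_j) p'_j is the marginal of Q₂. Here S_C = -∑_i p_i ln(p_i/V_i) and S_{C'} = -∑_j p'_j ln(p'_j/V'_j). -/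
/-!
The likelihood ratio of `P₂ = (v j i * p i)` against its Bayes reversal `Q₂` is
`(p i / V i) / (p' j / V' j)`: the channel weight cancels. Averaging its logarithm under `P₂`,
whose marginals are `p` and `p'`, gives `S_{C'} - S_C`. The comparison with the marginal
divergence is the log-sum inequality applied to each row `i` of the two joint laws.
-/

open Real Finset

namespace Real

/-- Gibbs' bound `log x ≥ 1 - 1/x` at `x = a / (b c)`, multiplied by `a`. -/
lemma mul_log_add_sub_le_mul_log_div {a b c : ℝ} (ha : 0 ≤ a) (hb : 0 ≤ b)
    (hab : b = 0 → a = 0) (hc : 0 < c) :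
    a * log c + a - b * c ≤ a * log (a / b) := by
  rcases ha.eq_or_lt with rfl | ha
  · simpa using mul_nonneg hb hc.le
  have hb : 0 < b := hb.lt_of_ne fun h => ha.ne' (hab h.symm)
  have hgibbs : log (b * c / a) ≤ b * c / a - 1 := log_le_sub_one_of_pos (by positivity)
  rw [log_div (by positivity) ha.ne', log_mul hb.ne' hc.ne'] at hgibbs
  rw [log_div ha.ne' hb.ne']
  have : a * (log b + log c - log a) ≤ b * c - a :=
    calc _ ≤ a * (b * c / a - 1) := mul_le_mul_of_nonneg_left hgibbs ha.le
      _ = b * c - a := by field_simp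
  linarith

/-- The log-sum inequality. -/
theorem sum_mul_log_sum_div_sum_le {κ : Type*} {s : Finset κ} {a b : κ → ℝ}
    (ha : ∀ j ∈ s, 0 ≤ a j) (hb : ∀ j ∈ s, 0 ≤ b j) (hab : ∀ j ∈ s, b j = 0 → a j = 0) :
    (∑ j ∈ s, a j) * log ((∑ j ∈ s, a j) / ∑ j ∈ s, b j) ≤ ∑ j ∈ s, a j * log (a j / b j) := by
  set A := ∑ j ∈ s, a j
  set B := ∑ j ∈ s, b j
  rcases (sum_nonneg ha).eq_or_lt with hA | hA
  · have hzero : ∀ j ∈ s, a j = 0 := (sum_eq_zero_iff_of_nonneg ha).mp hA.symm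
    rw [show A = 0 from hA.symm, zero_mul, sum_eq_zero fun j hj => by rw [hzero j hj, zero_mul]]
  have hB : 0 < B := by
    refine (sum_nonneg hb).lt_of_ne fun hB => hA.ne' (sum_eq_zero fun j hj => hab j hj ?_)
    exact (sum_eq_zero_iff_of_nonneg hb).mp hB.symm j hj
  calc A * log (A / B) = ∑ j ∈ s, (a j * log (A / B) + a j - b j * (A / B)) := by
        rw [sum_sub_distrib, sum_add_distrib, ← sum_mul, ← sum_mul, mul_div_cancel₀ _ hB.ne']
        ring
    _ ≤ ∑ j ∈ s, a j * log (a j / b j) := sum_le_sum fun j hj =>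
        mul_log_add_sub_le_mul_log_div (ha j hj) (hb j hj) (hab j hj) (by positivity)

/-- Pointwise form of `log (P₂ / Q₂)`: the channel weight `v` cancels from the
likelihood ratio of the joint law against its Bayes reversal. -/
lemma mul_log_mul_div_div_mul_eq {v p V W p' : ℝ} (hV : V ≠ 0) (hW : W ≠ 0)
    (hp' : v * p ≠ 0 → p' ≠ 0) :
    v * p * log (v * p / (v * V / W * p')) = v * p * (log (p / V) - log (p' / W)) := by
  rcases eq_or_ne (v * p) 0 with h | h
  · simp [h]
  have hv : v ≠ 0 := left_ne_zero_of_mul h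
  have hp : p ≠ 0 := right_ne_zero_of_mul h
  replace hp' := hp' h
  rw [← log_div (by positivity) (by positivity)]
  congr 2
  field_simp

end Real

lemma Finset.sum_sum_mul_sub {ι κ R : Type*} [CommRing R] (s : Finset ι) (t : Finset κ)
    (w : κ → ι → R) (f : ι → R) (g : κ → R) :
    ∑ i ∈ s, ∑ j ∈ t, w j i * (f i - g j)
      = ∑ i ∈ s, (∑ j ∈ t, w j i) * f i - ∑ j ∈ t, (∑ i ∈ s, w j i) * g j := by
  simp only [mul_sub, sum_sub_distrib, sum_mul]
  rw [sum_comm (s := s) (t := t) (f := fun i j => w j i * g j)]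

theorem obs_entropy_stochastic_monotone_quantitative_general {ι κ : Type*} [Fintype ι] [Fintype κ]
    (p V : ι → ℝ) (v : κ → ι → ℝ)
    (hp : ∀ i, 0 ≤ p i)
    (hV : ∀ i, 0 < V i)
    (hv : ∀ j i, 0 ≤ v j i) (hvsum : ∀ i, ∑ j, v j i = 1)
    (p' V' : κ → ℝ)
    (hp' : ∀ j, p' j = ∑ i, v j i * p i)
    (hV'pos : ∀ j, 0 < V' j) :
    ((-∑ j, p' j * Real.log (p' j / V' j)) - (-∑ i, p i * Real.log (p i / V i))
        = ∑ i, ∑ j, (v j i * p i) * Real.log ((v j i * p i) / ((v j i * V i / V' j) * p' j)))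
    ∧ (∑ i, p i * Real.log (p i / (∑ j, (v j i * V i / V' j) * p' j))
        ≤ ∑ i, ∑ j, (v j i * p i) * Real.log ((v j i * p i) / ((v j i * V i / V' j) * p' j))) := by
  have hP₂ : ∀ j i, 0 ≤ v j i * p i := fun j i => mul_nonneg (hv j i) (hp i)
  have hsupp : ∀ j i, p' j = 0 → v j i * p i = 0 := fun j i h =>
    le_antisymm (h ▸ hp' j ▸ single_le_sum (fun i _ => hP₂ j i) (mem_univ i)) (hP₂ j i)
  refine ⟨?_, sum_le_sum fun i _ => ?_⟩
  · calc _ = ∑ i, (∑ j, v j i * p i) * log (p i / V i)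
            - ∑ j, (∑ i, v j i * p i) * log (p' j / V' j) := by
          simp only [← sum_mul, hvsum, one_mul, ← hp']
          ring
      _ = _ := by
          rw [← sum_sum_mul_sub]
          refine sum_congr rfl fun i _ => sum_congr rfl fun j _ => ?_
          exact (mul_log_mul_div_div_mul_eq (hV i).ne' (hV'pos j).ne' (mt (hsupp j i))).symm
  · have hQ₂ : ∀ j, v j i * V i / V' j * p' j = 0 → v j i * p i = 0 := fun j h => by
      simp only [mul_eq_zero, div_eq_zero_iff, (hV i).ne', (hV'pos j).ne', or_false] at h
      rcases h with h | h
      · simp [h]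
      · exact hsupp j i h
    have hp'nonneg : ∀ j, 0 ≤ p' j := fun j => hp' j ▸ sum_nonneg fun i _ => hP₂ j i
    have hQ₂nonneg : ∀ j, 0 ≤ v j i * V i / V' j * p' j := fun j =>
      mul_nonneg (div_nonneg (mul_nonneg (hv j i) (hV i).le) (hV'pos j).le) (hp'nonneg j)
    have := sum_mul_log_sum_div_sum_le (s := univ) (a := fun j => v j i * p i)
      (fun j _ => hP₂ j i) (fun j _ => hQ₂nonneg j) (fun j _ => hQ₂ j)
    simpa only [← sum_mul, hvsum, one_mul] using this

/-- quantitative form of stochastic monotonicity: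
`S_{C'} - S_C = D_KL(P₂‖Q₂)` and `D_KL(P₂‖Q₂) ≥ D_KL(p‖q)` for the marginals. -/
theorem obs_entropy_stochastic_monotone_quantitative {ι κ : Type*} [Fintype ι] [Fintype κ]
    (p V : ι → ℝ) (v : κ → ι → ℝ)
    (hp : ∀ i, 0 ≤ p i) (hpsum : ∑ i, p i = 1)
    (hV : ∀ i, 0 < V i)
    (hv : ∀ j i, 0 ≤ v j i) (hvsum : ∀ i, ∑ j, v j i = 1)
    (p' V' : κ → ℝ)
    (hp' : ∀ j, p' j = ∑ i, v j i * p i)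
    (hV' : ∀ j, V' j = ∑ i, v j i * V i)
    (hV'pos : ∀ j, 0 < V' j) :
    ((-∑ j, p' j * Real.log (p' j / V' j)) - (-∑ i, p i * Real.log (p i / V i))
        = ∑ i, ∑ j, (v j i * p i) * Real.log ((v j i * p i) / ((v j i * V i / V' j) * p' j)))
    ∧ (∑ i, p i * Real.log (p i / (∑ j, (v j i * V i / V' j) * p' j))
        ≤ ∑ i, ∑ j, (v j i * p i) * Real.log ((v j i * p i) / ((v j i * V i / V' j) * p' j))) :=
  obs_entropy_stochastic_monotone_quantitative_general p V v hp hV hv hvsum p' V' hp' hV'pos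
end

section
/- State concavity of observational entropy: for a POVM {Π_i}, probabilities λ_k > 0 with ∑_k λ_k = 1, and density matrices ρ_k, one has ∑_k λ_k S_C(ρ_k) ≤ S_C(∑_k λ_k ρ_k), where S_C(ρ) = -∑_i Tr[Π_i ρ] ln(Tr[Π_i ρ]/Tr[Π_i]). Equality holds iff Tr[Π_i ρ_k] = Tr[Π_i ρ_{k'}] for all i, k, k'. -/
/-!
The outcome probabilities `Tr[Π_i ρ]` are real-linear in `ρ` and nonnegative on positive
semidefinite `ρ`, so the claim is Jensen's inequality for `p ↦ -∑ i, p i * log (p i / V i)` on the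
nonnegative orthant. That function is a sum of one-variable functions, each `negMulLog` plus a
linear term, hence strictly concave; the equality case of Jensen then says that all outcome
distributions coincide.
-/

open Matrix BigOperators ComplexOrder

open Finset Real

theorem StrictConcaveOn.sum_pi {𝕜 E β ι : Type*} [Fintype ι] [Semiring 𝕜] [PartialOrder 𝕜]
    [AddCommMonoid E] [Module 𝕜 E] [AddCommMonoid β] [PartialOrder β]
    [IsOrderedCancelAddMonoid β] [Module 𝕜 β] [PosSMulMono 𝕜 β] {s : ι → Set E} {f : ι → E → β}
    (hf : ∀ i, StrictConcaveOn 𝕜 (s i) (f i)) :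
    StrictConcaveOn 𝕜 (Set.univ.pi s) fun x => ∑ i, f i (x i) := by
  refine ⟨convex_pi fun i _ => (hf i).1, fun x hx y hy hxy a b ha hb hab => ?_⟩
  obtain ⟨j, hj⟩ := Function.ne_iff.mp hxy
  simp only [Pi.add_apply, Pi.smul_apply, smul_sum, ← sum_add_distrib]
  exact sum_lt_sum (fun i _ => (hf i).concaveOn.2 (hx i trivial) (hy i trivial) ha.le hb.le hab)
    ⟨j, mem_univ j, (hf j).2 (hx j trivial) (hy j trivial) hj ha hb hab⟩

lemma neg_mul_log_div {V : ℝ} (hV : V ≠ 0) (x : ℝ) :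
    -(x * log (x / V)) = negMulLog x + log V * x := by
  rcases eq_or_ne x 0 with rfl | hx
  · simp
  · rw [log_div hx hV, negMulLog]; ring

lemma strictConcaveOn_neg_mul_log_div {V : ℝ} (hV : V ≠ 0) :
    StrictConcaveOn ℝ (Set.Ici 0) fun x => -(x * log (x / V)) := by
  simp_rw [neg_mul_log_div hV]
  exact strictConcaveOn_negMulLog.add_concaveOn
    ((LinearMap.mul ℝ ℝ (log V)).concaveOn (convex_Ici 0))

noncomputable def obsEntropy {ι : Type*} [Fintype ι] (V p : ι → ℝ) : ℝ :=
  -∑ i, p i * log (p i / V i)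

lemma strictConcaveOn_obsEntropy {ι : Type*} [Fintype ι] {V : ι → ℝ} (hV : ∀ i, V i ≠ 0) :
    StrictConcaveOn ℝ (Set.univ.pi fun _ => Set.Ici 0) (obsEntropy V) := by
  refine (StrictConcaveOn.sum_pi fun i => strictConcaveOn_neg_mul_log_div (hV i)).congr ?_
  exact fun p _ => sum_neg_distrib _

lemma Matrix.PosSemidef.trace_mul_nonneg {n 𝕜 : Type*} [Fintype n] [RCLike 𝕜]
    {A B : Matrix n n 𝕜} (hA : A.PosSemidef) (hB : B.PosSemidef) : 0 ≤ (A * B).trace := by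
  classical
  open scoped MatrixOrder in
  obtain ⟨X, rfl⟩ := CStarAlgebra.nonneg_iff_eq_star_mul_self.mp hA.nonneg
  rw [star_eq_conjTranspose, Matrix.mul_assoc, trace_mul_comm]
  exact (hB.mul_mul_conjTranspose_same X).trace_nonneg

noncomputable def outcomeProbs {ι n : Type*} [Fintype n] (P : ι → Matrix n n ℂ)
    (ρ : Matrix n n ℂ) : ι → ℝ :=
  fun i => (P i * ρ).trace.re

lemma outcomeProbs_nonneg {ι n : Type*} [Fintype n] {P : ι → Matrix n n ℂ}
    (hP : ∀ i, (P i).PosSemidef) {ρ : Matrix n n ℂ} (hρ : ρ.PosSemidef) :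
    0 ≤ outcomeProbs P ρ :=
  fun i => Complex.nonneg_iff.mp ((hP i).trace_mul_nonneg hρ) |>.1

lemma outcomeProbs_sum_smul {ι κ n : Type*} [Fintype κ] [Fintype n] (P : ι → Matrix n n ℂ)
    (lam : κ → ℝ) (ρ : κ → Matrix n n ℂ) :
    outcomeProbs P (∑ k, (lam k : ℂ) • ρ k) = ∑ k, lam k • outcomeProbs P (ρ k) := by
  ext i
  simp [outcomeProbs, mul_sum, Complex.re_sum]

theorem obs_entropy_state_concavity_general {d : ℕ} {ι κ : Type*} [Fintype ι] [Fintype κ]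
    (P : ι → Matrix (Fin d) (Fin d) ℂ)
    (hP : ∀ i, (P i).PosSemidef)
    (hV : ∀ i, 0 < (P i).trace.re)
    (lam : κ → ℝ) (hlam : ∀ k, 0 < lam k) (hlamsum : ∑ k, lam k = 1)
    (ρ : κ → Matrix (Fin d) (Fin d) ℂ)
    (hρ : ∀ k, (ρ k).PosSemidef) :
    (∑ k, lam k *
        (-∑ i, (P i * ρ k).trace.re * Real.log ((P i * ρ k).trace.re / (P i).trace.re))
      ≤ -∑ i, (P i * ∑ k, (lam k : ℂ) • ρ k).trace.re *
          Real.log ((P i * ∑ k, (lam k : ℂ) • ρ k).trace.re / (P i).trace.re))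
    ∧ ((∑ k, lam k *
          (-∑ i, (P i * ρ k).trace.re * Real.log ((P i * ρ k).trace.re / (P i).trace.re))
        = -∑ i, (P i * ∑ k, (lam k : ℂ) • ρ k).trace.re *
            Real.log ((P i * ∑ k, (lam k : ℂ) • ρ k).trace.re / (P i).trace.re))
      ↔ ∀ i k k', (P i * ρ k).trace.re = (P i * ρ k').trace.re) := by
  have hS := strictConcaveOn_obsEntropy fun i => (hV i).ne'
  have hmem : ∀ k ∈ univ, outcomeProbs P (ρ k) ∈ Set.univ.pi fun _ => Set.Ici 0 :=
    fun k _ i _ => outcomeProbs_nonneg hP (hρ k) i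
  have jensen := hS.concaveOn.le_map_sum (fun k _ => (hlam k).le) hlamsum hmem
  have equality := hS.map_sum_eq_iff_of_pos (fun k _ => hlam k) hlamsum hmem
  rw [← outcomeProbs_sum_smul] at jensen equality
  simp only [obsEntropy, outcomeProbs, smul_eq_mul, mem_univ, true_implies, funext_iff]
    at jensen equality
  refine ⟨jensen, eq_comm.trans (equality.trans ?_)⟩
  exact ⟨fun h i k k' => @h k k' i, fun h k k' i => h i k k'⟩

/-- state concavity of observational entropy, with equality iff all the
states `ρ k` are indistinguishable for the coarse-graining. -/
theorem obs_entropy_state_concavity {d : ℕ} {ι κ : Type*} [Fintype ι] [Fintype κ]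
    (P : ι → Matrix (Fin d) (Fin d) ℂ)
    (hP : ∀ i, (P i).PosSemidef) (hsum : ∑ i, P i = 1)
    (hV : ∀ i, 0 < (P i).trace.re)
    (lam : κ → ℝ) (hlam : ∀ k, 0 < lam k) (hlamsum : ∑ k, lam k = 1)
    (ρ : κ → Matrix (Fin d) (Fin d) ℂ)
    (hρ : ∀ k, (ρ k).PosSemidef) (hρtr : ∀ k, (ρ k).trace = 1) :
    (∑ k, lam k *
        (-∑ i, (P i * ρ k).trace.re * Real.log ((P i * ρ k).trace.re / (P i).trace.re))
      ≤ -∑ i, (P i * ∑ k, (lam k : ℂ) • ρ k).trace.re *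
          Real.log ((P i * ∑ k, (lam k : ℂ) • ρ k).trace.re / (P i).trace.re))
    ∧ ((∑ k, lam k *
          (-∑ i, (P i * ρ k).trace.re * Real.log ((P i * ρ k).trace.re / (P i).trace.re))
        = -∑ i, (P i * ∑ k, (lam k : ℂ) • ρ k).trace.re *
            Real.log ((P i * ∑ k, (lam k : ℂ) • ρ k).trace.re / (P i).trace.re))
      ↔ ∀ i k k', (P i * ρ k).trace.re = (P i * ρ k').trace.re) :=
  obs_entropy_state_concavity_general P hP hV lam hlam hlamsum ρ hρ
end

section
/- If a density matrix ρ on a d-dimensional space admits the decomposition ρ = ∑_i (p_i/V_i) Π_i, where {Π_i} is a POVM, p_i = Tr[Π_i ρ], and V_i = Tr[Π_i] > 0, then the observational entropy equals the von Neumann entropy: -∑_i p_i ln(p_i/V_i) = -Tr[ρ ln ρ]. -/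
/-!
Diagonalise `ρ = U diag(λ) Uᴴ` and put `a i k = (Uᴴ Π_i U)_kk`, `c i = p_i / V_i`. Then `a` is
column-stochastic, `p_i = ∑_k a_ik λ_k`, `V_i = ∑_k a_ik`, and the decomposition of `ρ` says
`λ_k = ∑_i a_ik c_i`. Jensen for the convex `x ↦ x log x` applied to `λ_k = ∑_i a_ik c_i` gives
`∑_k λ_k log λ_k ≤ ∑_i p_i log c_i`; Jensen for the concave `log`, weighted by `λ_k`, gives the
reverse inequality. The latter needs `c_i > 0` whenever `a_ik λ_k > 0`, which `p_i = c_i V_i`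
provides.
-/

open Matrix BigOperators ComplexOrder

/-- The matrix logarithm of a Hermitian matrix, via the spectral theorem. -/
noncomputable def hermLog {d : ℕ} {A : Matrix (Fin d) (Fin d) ℂ} (hA : A.IsHermitian) :
    Matrix (Fin d) (Fin d) ℂ :=
  (hA.eigenvectorUnitary : Matrix (Fin d) (Fin d) ℂ) *
    Matrix.diagonal (fun x => ((Real.log (hA.eigenvalues x) : ℝ) : ℂ)) *
    (hA.eigenvectorUnitary : Matrix (Fin d) (Fin d) ℂ)ᴴ

open Real

theorem Real.sum_mul_log_le_log_sum_mul {ι : Type*} [Fintype ι] {w x : ι → ℝ}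
    (hw : ∀ i, 0 ≤ w i) (hw1 : ∑ i, w i = 1) (hx : ∀ i, w i ≠ 0 → 0 < x i)
    (hS : 0 < ∑ i, w i * x i) :
    ∑ i, w i * log (x i) ≤ log (∑ i, w i * x i) := by
  set S := ∑ i, w i * x i
  have term : ∀ i, w i * log (x i) - w i * log S ≤ w i * x i / S - w i := by
    intro i
    rcases eq_or_ne (w i) 0 with h | h
    · simp [h]
    have key := log_le_sub_one_of_pos (div_pos (hx i h) hS)
    rw [log_div (hx i h).ne' hS.ne'] at key
    calc w i * log (x i) - w i * log S = w i * (log (x i) - log S) := by ring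
      _ ≤ w i * (x i / S - 1) := mul_le_mul_of_nonneg_left key (hw i)
      _ = w i * x i / S - w i := by ring
  have := Finset.sum_le_sum fun i (_ : i ∈ Finset.univ) => term i
  rw [Finset.sum_sub_distrib, Finset.sum_sub_distrib, ← Finset.sum_mul, ← Finset.sum_div, hw1,
    div_self hS.ne'] at this
  linarith

section Stochastic

variable {ι κ : Type*} [Fintype ι] [Fintype κ] {a : ι → κ → ℝ} {c : ι → ℝ} {q : κ → ℝ}

theorem sum_mul_log_le_sum_mul_mul_log (ha : ∀ i k, 0 ≤ a i k) (hcol : ∀ k, ∑ i, a i k = 1)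
    (hc : ∀ i, 0 ≤ c i) (hq : ∀ k, q k = ∑ i, a i k * c i) :
    ∑ k, q k * log (q k) ≤ ∑ i, (∑ k, a i k) * (c i * log (c i)) := by
  have jensen : ∀ k, q k * log (q k) ≤ ∑ i, a i k * (c i * log (c i)) := fun k => by
    simpa only [hq k, smul_eq_mul] using convexOn_mul_log.map_sum_le
      (fun i _ => ha i k) (hcol k) (fun i _ => Set.mem_Ici.mpr (hc i))
  calc ∑ k, q k * log (q k) ≤ ∑ k, ∑ i, a i k * (c i * log (c i)) :=
        Finset.sum_le_sum fun k _ => jensen k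
    _ = ∑ i, (∑ k, a i k) * (c i * log (c i)) := by
        rw [Finset.sum_comm]
        simp only [Finset.sum_mul]

theorem sum_mul_log_le_sum_mul_log (ha : ∀ i k, 0 ≤ a i k) (hcol : ∀ k, ∑ i, a i k = 1)
    (hc : ∀ i, 0 ≤ c i) (hq : ∀ k, q k = ∑ i, a i k * c i)
    (hfix : ∀ i, ∑ k, a i k * q k = c i * ∑ k, a i k) :
    ∑ i, (∑ k, a i k * q k) * log (c i) ≤ ∑ k, q k * log (q k) := by
  have hq0 : ∀ k, 0 ≤ q k := fun k =>
    (hq k).symm ▸ Finset.sum_nonneg fun i _ => mul_nonneg (ha i k) (hc i)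
  have hpos : ∀ k, 0 < q k → ∀ i, a i k ≠ 0 → 0 < c i := by
    intro k hk i hik
    refine (hc i).lt_of_ne fun hci => hik ?_
    have hzero : ∑ k', a i k' * q k' = 0 := by rw [hfix i, ← hci, zero_mul]
    have := (Finset.sum_eq_zero_iff_of_nonneg fun k' _ => mul_nonneg (ha i k') (hq0 k')).mp
      hzero k (Finset.mem_univ k)
    exact (mul_eq_zero.mp this).resolve_right hk.ne'
  have jensen : ∀ k, q k * ∑ i, a i k * log (c i) ≤ q k * log (q k) := by
    intro k
    rcases (hq0 k).eq_or_lt with hk | hk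
    · simp [← hk]
    refine mul_le_mul_of_nonneg_left ?_ hk.le
    have hck := hpos k hk
    rw [hq k] at hk ⊢
    exact Real.sum_mul_log_le_log_sum_mul (ha · k) (hcol k) hck hk
  calc ∑ i, (∑ k, a i k * q k) * log (c i) = ∑ k, q k * ∑ i, a i k * log (c i) := by
        simp only [Finset.sum_mul, Finset.mul_sum]
        rw [Finset.sum_comm]
        exact Finset.sum_congr rfl fun _ _ => Finset.sum_congr rfl fun _ _ => by ring
    _ ≤ ∑ k, q k * log (q k) := Finset.sum_le_sum fun k _ => jensen k

theorem sum_mul_log_eq_of_fixed (ha : ∀ i k, 0 ≤ a i k) (hcol : ∀ k, ∑ i, a i k = 1)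
    (hc : ∀ i, 0 ≤ c i) (hq : ∀ k, q k = ∑ i, a i k * c i)
    (hfix : ∀ i, ∑ k, a i k * q k = c i * ∑ k, a i k) :
    ∑ i, (∑ k, a i k * q k) * log (c i) = ∑ k, q k * log (q k) := by
  refine le_antisymm (sum_mul_log_le_sum_mul_log ha hcol hc hq hfix) ?_
  calc ∑ k, q k * log (q k) ≤ ∑ i, (∑ k, a i k) * (c i * log (c i)) :=
        sum_mul_log_le_sum_mul_mul_log ha hcol hc hq
    _ = ∑ i, (∑ k, a i k * q k) * log (c i) :=
        Finset.sum_congr rfl fun i _ => by rw [hfix i]; ring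

end Stochastic

namespace Matrix

variable {n : Type*} [Fintype n]

theorem re_trace_mul_mul_diagonal_mul [DecidableEq n] (M U W : Matrix n n ℂ) (f : n → ℝ) :
    (M * (U * diagonal (fun k => (f k : ℂ)) * W)).trace.re =
      ∑ k, ((W * M * U) k k).re * f k := by
  rw [← mul_assoc, trace_mul_comm, ← mul_assoc, ← mul_assoc]
  simp only [trace, diag, mul_diagonal, Complex.re_sum, Complex.re_mul_ofReal]

theorem re_mul_sum_smul_mul_apply {ι : Type*} [Fintype ι] (U W : Matrix n n ℂ) (c : ι → ℝ)
    (P : ι → Matrix n n ℂ) (k l : n) :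
    ((W * (∑ i, (c i : ℂ) • P i) * U) k l).re = ∑ i, ((W * P i * U) k l).re * c i := by
  simp only [Finset.mul_sum, Finset.sum_mul, Matrix.mul_smul, Matrix.smul_mul, sum_apply,
    smul_apply, smul_eq_mul, Complex.re_sum, Complex.re_ofReal_mul]
  exact Finset.sum_congr rfl fun i _ => mul_comm _ _

theorem PosSemidef.re_conjTranspose_mul_mul_apply_nonneg {P : Matrix n n ℂ} (hP : P.PosSemidef)
    (U : Matrix n n ℂ) (k : n) : 0 ≤ ((Uᴴ * P * U) k k).re :=
  (Complex.nonneg_iff.mp (hP.conjTranspose_mul_mul_same U).diag_nonneg).1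

theorem sum_re_conjTranspose_mul_mul_apply [DecidableEq n] {ι : Type*} [Fintype ι]
    {P : ι → Matrix n n ℂ} (hsum : ∑ i, P i = 1) {U : Matrix n n ℂ} (hU : Uᴴ * U = 1) (k : n) :
    ∑ i, ((Uᴴ * P i * U) k k).re = 1 := by
  rw [← Complex.re_sum, ← sum_apply, ← Finset.sum_mul, ← Finset.mul_sum, hsum, mul_one, hU,
    one_apply_eq, Complex.one_re]

theorem IsHermitian.conjTranspose_eigenvectorUnitary_mul_mul [DecidableEq n]
    {A : Matrix n n ℂ} (hA : A.IsHermitian) :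
    (hA.eigenvectorUnitary : Matrix n n ℂ)ᴴ * A * hA.eigenvectorUnitary =
      diagonal (fun k => (hA.eigenvalues k : ℂ)) := by
  have := hA.conjStarAlgAut_star_eigenvectorUnitary
  rwa [Unitary.conjStarAlgAut_star_apply] at this

theorem IsHermitian.re_trace_mul_eq_sum [DecidableEq n] {A : Matrix n n ℂ}
    (hA : A.IsHermitian) (M : Matrix n n ℂ) :
    (M * A).trace.re = ∑ k, (((hA.eigenvectorUnitary : Matrix n n ℂ)ᴴ * M *
      hA.eigenvectorUnitary) k k).re * hA.eigenvalues k := by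
  conv_lhs => rw [hA.spectral_theorem]
  exact re_trace_mul_mul_diagonal_mul _ _ _ _

theorem IsHermitian.re_trace_mul_hermLog {d : ℕ} {A : Matrix (Fin d) (Fin d) ℂ}
    (hA : A.IsHermitian) :
    (A * hermLog hA).trace.re = ∑ k, hA.eigenvalues k * log (hA.eigenvalues k) := by
  simpa [hermLog, hA.conjTranspose_eigenvectorUnitary_mul_mul, mul_comm] using
    re_trace_mul_mul_diagonal_mul A hA.eigenvectorUnitary (hA.eigenvectorUnitary : Matrix _ _ ℂ)ᴴ
      (log ∘ hA.eigenvalues)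

end Matrix

theorem obs_entropy_eq_vN_of_decomposition_general {d : ℕ} {ι : Type*} [Fintype ι]
    (P : ι → Matrix (Fin d) (Fin d) ℂ)
    (hP : ∀ i, (P i).PosSemidef) (hsum : ∑ i, P i = 1)
    (hV : ∀ i, 0 < (P i).trace.re)
    (ρ : Matrix (Fin d) (Fin d) ℂ) (hρ : ρ.PosSemidef)
    (hdec : ρ = ∑ i, ((((P i * ρ).trace.re / (P i).trace.re : ℝ)) : ℂ) • P i) :
    -∑ i, (P i * ρ).trace.re * Real.log ((P i * ρ).trace.re / (P i).trace.re)
      = -(ρ * hermLog hρ.isHermitian).trace.re := by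
  set U : Matrix (Fin d) (Fin d) ℂ := ↑hρ.isHermitian.eigenvectorUnitary
  set q := hρ.isHermitian.eigenvalues
  set a : ι → Fin d → ℝ := fun i k => ((Uᴴ * P i * U) k k).re
  set c : ι → ℝ := fun i => (P i * ρ).trace.re / (P i).trace.re
  obtain ⟨hUU, hUU'⟩ : Uᴴ * U = 1 ∧ U * Uᴴ = 1 :=
    Unitary.mem_iff.mp hρ.isHermitian.eigenvectorUnitary.2
  have ha : ∀ i k, 0 ≤ a i k := fun i k => (hP i).re_conjTranspose_mul_mul_apply_nonneg U k
  have hp : ∀ i, (P i * ρ).trace.re = ∑ k, a i k * q k := fun i =>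
    hρ.isHermitian.re_trace_mul_eq_sum (P i)
  have htr : ∀ i, (P i).trace.re = ∑ k, a i k := fun i => by
    simpa [hUU'] using re_trace_mul_mul_diagonal_mul (P i) U Uᴴ 1
  have hq : ∀ k, q k = ∑ i, a i k * c i := fun k => by
    have hdiag : Uᴴ * ρ * U = diagonal (fun k => (q k : ℂ)) :=
      hρ.isHermitian.conjTranspose_eigenvectorUnitary_mul_mul
    have := congrArg (fun M => (M k k).re) hdiag
    rw [hdec] at this
    simpa only [re_mul_sum_smul_mul_apply, diagonal_apply_eq, Complex.ofReal_re] using this.symm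
  have hc : ∀ i, 0 ≤ c i := fun i => div_nonneg ((hp i).symm ▸ Finset.sum_nonneg fun k _ =>
    mul_nonneg (ha i k) (hρ.eigenvalues_nonneg k)) (hV i).le
  have hfix : ∀ i, ∑ k, a i k * q k = c i * ∑ k, a i k := fun i => by
    rw [← hp, ← htr, div_mul_cancel₀ _ (hV i).ne']
  rw [hρ.isHermitian.re_trace_mul_hermLog, neg_inj,
    ← sum_mul_log_eq_of_fixed ha (sum_re_conjTranspose_mul_mul_apply hsum hUU) hc hq hfix]
  exact Finset.sum_congr rfl fun i _ => by rw [← hp i]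

/-- if a density matrix admits the decomposition `ρ = ∑ i (p i / V i) • Π i`
for a POVM `{Π i}`, then the observational entropy equals the von Neumann entropy
`S(ρ) = -Tr[ρ ln ρ]`. -/
theorem obs_entropy_eq_vN_of_decomposition {d : ℕ} {ι : Type*} [Fintype ι]
    (P : ι → Matrix (Fin d) (Fin d) ℂ)
    (hP : ∀ i, (P i).PosSemidef) (hsum : ∑ i, P i = 1)
    (hV : ∀ i, 0 < (P i).trace.re)
    (ρ : Matrix (Fin d) (Fin d) ℂ) (hρ : ρ.PosSemidef) (hρtr : ρ.trace = 1)
    (hdec : ρ = ∑ i, ((((P i * ρ).trace.re / (P i).trace.re : ℝ)) : ℂ) • P i) :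
    -∑ i, (P i * ρ).trace.re * Real.log ((P i * ρ).trace.re / (P i).trace.re)
      = -(ρ * hermLog hρ.isHermitian).trace.re :=
  obs_entropy_eq_vN_of_decomposition_general P hP hsum hV ρ hρ hdec
end

section
/- Memoryless propagation characterizes equality in sequential non-increase: let p_{ij} be a joint probability distribution (i the later outcome, j the earlier), V_{ij} > 0 volumes with marginals p_j, V_j, and define conditional volume v(i|j) = V_{ij}/V_j. If p_{ij} = v(i|j) p_j for all i, j, then -∑_{ij} p_{ij} ln(p_{ij}/V_{ij}) = -∑_j p_j ln(p_j/V_j); conversely, if the two observational entropies are equal, then p_{ij} = v(i|j) p_j for all i and all j with p_j > 0. -/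
open BigOperators

/-- memoryless propagation characterizes equality in the sequential
non-increase of observational entropy: `S_{AB} = S_B` iff `p i j = (V i j / V j) p j`
(the converse holding for all `j` with `p j > 0`). -/
theorem memoryless_iff_obs_entropy_eq {ι κ : Type*} [Fintype ι] [Fintype κ]
    (p V : ι → κ → ℝ)
    (hp : ∀ i j, 0 ≤ p i j) (hpsum : ∑ i, ∑ j, p i j = 1)
    (hV : ∀ i j, 0 < V i j)
    (pm Vm : κ → ℝ)
    (hpm : ∀ j, pm j = ∑ i, p i j) (hVm : ∀ j, Vm j = ∑ i, V i j) :
    ((∀ i j, p i j = (V i j / Vm j) * pm j) →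
      -∑ i, ∑ j, p i j * Real.log (p i j / V i j)
        = -∑ j, pm j * Real.log (pm j / Vm j))
    ∧ ((-∑ i, ∑ j, p i j * Real.log (p i j / V i j)
          = -∑ j, pm j * Real.log (pm j / Vm j)) →
        ∀ i j, 0 < pm j → p i j = (V i j / Vm j) * pm j) := by
  classical
  haveI hne : Nonempty ι := by
    rcases isEmpty_or_nonempty ι with h | h
    · exfalso
      simp only [Finset.univ_eq_empty, Finset.sum_empty] at hpsum
      exact one_ne_zero hpsum.symm
    · exact h
  set q : ι → κ → ℝ := fun i j => V i j / Vm j * pm j with hq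
  have hVmpos : ∀ j, 0 < Vm j := fun j => by
    rw [hVm]; exact Finset.sum_pos (fun i _ => hV i j) Finset.univ_nonempty
  have hpm_nonneg : ∀ j, 0 ≤ pm j := fun j => by
    rw [hpm]; exact Finset.sum_nonneg fun i _ => hp i j
  have hple : ∀ i j, p i j ≤ pm j := fun i j => by
    rw [hpm]; exact Finset.single_le_sum (fun i _ => hp i j) (Finset.mem_univ i)
  have hqnn : ∀ i j, 0 ≤ q i j := fun i j =>
    mul_nonneg (div_nonneg (hV i j).le (hVmpos j).le) (hpm_nonneg j)
  have hqsum : ∀ j, ∑ i, q i j = pm j := fun j => by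
    simp only [hq]
    rw [← Finset.sum_mul, ← Finset.sum_div, ← hVm, div_self (hVmpos j).ne', one_mul]
  have hpmsum : ∑ j, pm j = 1 := by
    simp only [hpm]; rw [Finset.sum_comm]; exact hpsum
  -- key log-splitting identity
  have hterm : ∀ i j, p i j * Real.log (p i j / q i j)
      = p i j * Real.log (p i j / V i j) - p i j * Real.log (pm j / Vm j) := by
    intro i j
    rcases eq_or_lt_of_le (hp i j) with h0 | h0
    · simp [← h0]
    · have hpmj : 0 < pm j := lt_of_lt_of_le h0 (hple i j)
      have hrw : p i j / q i j = (p i j / V i j) / (pm j / Vm j) := by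
        rw [hq]
        field_simp
      rw [hrw, Real.log_div (div_pos h0 (hV i j)).ne' (div_pos hpmj (hVmpos j)).ne', mul_sub]
  have hD : ∑ i, ∑ j, p i j * Real.log (p i j / q i j)
      = ∑ i, ∑ j, p i j * Real.log (p i j / V i j)
        - ∑ j, pm j * Real.log (pm j / Vm j) := by
    simp only [hterm, Finset.sum_sub_distrib]
    congr 1
    rw [Finset.sum_comm]
    refine Finset.sum_congr rfl fun j _ => ?_
    rw [← Finset.sum_mul, ← hpm]
  -- pointwise Gibbs inequality
  have hineq : ∀ i j, p i j - q i j ≤ p i j * Real.log (p i j / q i j) := by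
    intro i j
    rcases eq_or_lt_of_le (hp i j) with h0 | h0
    · rw [← h0]; simp; exact hqnn i j
    · have hpmj : 0 < pm j := lt_of_lt_of_le h0 (hple i j)
      have hqpos : 0 < q i j := mul_pos (div_pos (hV i j) (hVmpos j)) hpmj
      have h1 : Real.log (q i j / p i j) ≤ q i j / p i j - 1 :=
        Real.log_le_sub_one_of_pos (div_pos hqpos h0)
      have hlog : Real.log (p i j / q i j) = - Real.log (q i j / p i j) := by
        rw [← Real.log_inv, inv_div]
      have h2 : p i j * (q i j / p i j - 1) = q i j - p i j := by
        field_simp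
      nlinarith [mul_le_mul_of_nonneg_left h1 (hp i j)]
  have hstrict : ∀ i j, 0 < pm j → p i j ≠ q i j →
      p i j - q i j < p i j * Real.log (p i j / q i j) := by
    intro i j hpmj hneq
    have hqpos : 0 < q i j := mul_pos (div_pos (hV i j) (hVmpos j)) hpmj
    rcases eq_or_lt_of_le (hp i j) with h0 | h0
    · rw [← h0]; simp; exact hqpos
    · have hne1 : q i j / p i j ≠ 1 := by
        intro h
        exact hneq ((div_eq_one_iff_eq h0.ne').mp h).symm
      have h1 : Real.log (q i j / p i j) < q i j / p i j - 1 :=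
        Real.log_lt_sub_one_of_pos (div_pos hqpos h0) hne1
      have hlog : Real.log (p i j / q i j) = - Real.log (q i j / p i j) := by
        rw [← Real.log_inv, inv_div]
      have h2 : p i j * (q i j / p i j - 1) = q i j - p i j := by
        field_simp
      nlinarith [mul_lt_mul_of_pos_left h1 h0]
  constructor
  · -- forward direction
    intro hmem
    have hzero : ∀ i j, p i j * Real.log (p i j / q i j) = 0 := by
      intro i j
      have : p i j = q i j := hmem i j
      rcases eq_or_lt_of_le (hp i j) with h0 | h0
      · rw [← h0]; ring
      · rw [this, div_self (this ▸ h0).ne', Real.log_one, mul_zero]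
    have : (0:ℝ) = ∑ i, ∑ j, p i j * Real.log (p i j / V i j)
        - ∑ j, pm j * Real.log (pm j / Vm j) := by
      rw [← hD]
      simp [hzero]
    linarith [this]
  · -- converse
    intro hEq i j hpmj
    have hDzero : ∑ i, ∑ j, p i j * Real.log (p i j / q i j) = 0 := by
      rw [hD]
      have := neg_injective hEq
      linarith [this]
    have hsumpq : ∑ i, ∑ j, (p i j * Real.log (p i j / q i j) - (p i j - q i j)) = 0 := by
      simp only [Finset.sum_sub_distrib]
      have hqq : ∑ i, ∑ j, q i j = 1 := by
        rw [Finset.sum_comm]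
        simp only [hqsum]
        exact hpmsum
      rw [hDzero]
      linarith [hpsum, hqq]
    have hnn : ∀ i ∈ Finset.univ, 0 ≤ ∑ j, (p i j * Real.log (p i j / q i j) - (p i j - q i j)) :=
      fun i _ => Finset.sum_nonneg fun j _ => sub_nonneg.mpr (hineq i j)
    have houter := (Finset.sum_eq_zero_iff_of_nonneg hnn).mp hsumpq i (Finset.mem_univ i)
    have hinner := (Finset.sum_eq_zero_iff_of_nonneg
      (fun j _ => sub_nonneg.mpr (hineq i j))).mp houter j (Finset.mem_univ j)
    by_contra hneq
    have := hstrict i j hpmj (fun h => hneq (by rw [h, hq]))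
    linarith [this, hinner.ge, hinner.le]
end
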